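/- Conversely, if b < -a* (with a* the optimal 2D Gagliardo–Nirenberg constant), then the functional u ↦ ∫|∇u|² + (b/2)∫|u|⁴ is unbounded below on the unit L²-sphere of H^1(ℝ²). -/

import Mathlib

/-!
If `b < -a*`, then `-b` is not an admissible Gagliardo–Nirenberg constant, so some `u ∈ H¹`
has `‖u‖₂² ‖∇u‖₂² + (b/2) ‖u‖₄⁴ < 0`; normalising its mass gives a unit-mass function `w` of
negative energy. The mass-preserving dilations `w_λ(x) = λ w(λx)` in dimension two have
`‖∇w_λ‖₂² = λ² ‖∇w‖₂²` and `‖w_λ‖₄⁴ = λ² ‖w‖₄⁴`, so their energy `λ² E(w)` tends to `-∞`.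
-/

open MeasureTheory
noncomputable section

abbrev E2 := EuclideanSpace ℝ (Fin 2)

def InH1 (u : E2 → ℂ) : Prop :=
  Differentiable ℝ u ∧ MemLp u 2 volume ∧ MemLp (fun x => fderiv ℝ u x) 2 volume

def IsGNOptimal (astar : ℝ) : Prop :=
  0 < astar ∧
    IsGreatest {a : ℝ | ∀ u : E2 → ℂ, InH1 u →
      (∫ x, ‖u x‖ ^ 2) * (∫ x, ‖fderiv ℝ u x‖ ^ 2) ≥ a / 2 * ∫ x, ‖u x‖ ^ 4}
      astar

open Filter Module

section Dilation

variable {E F : Type*} [NormedAddCommGroup E] [NormedSpace ℝ E] [NormedAddCommGroup F]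

theorem MeasureTheory.MemLp.comp_smul [MeasurableSpace E] [BorelSpace E]
    [FiniteDimensional ℝ E] {μ : Measure E} [μ.IsAddHaarMeasure] {f : E → F} {p : ENNReal}
    (hf : MemLp f p μ) {R : ℝ} (hR : R ≠ 0) : MemLp (fun x => f (R • x)) p μ := by
  have hemb : MeasurableEmbedding (R • · : E → E) :=
    (Homeomorph.smul (isUnit_iff_ne_zero.2 hR).unit).measurableEmbedding
  refine (hemb.memLp_map_measure_iff (g := f)).1 ?_
  rw [Measure.map_addHaar_smul μ hR]
  exact hf.smul_measure ENNReal.ofReal_ne_top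

variable [NormedSpace ℝ F]

def dilate (t l : ℝ) (u : E → F) : E → F := fun x => t • u (l • x)

theorem norm_dilate (t l : ℝ) (u : E → F) (x : E) :
    ‖dilate t l u x‖ = |t| * ‖u (l • x)‖ := by
  rw [dilate, norm_smul, Real.norm_eq_abs]

theorem fderiv_dilate {u : E → F} (hu : Differentiable ℝ u) (t l : ℝ) (x : E) :
    fderiv ℝ (dilate t l u) x = (t * l) • fderiv ℝ u (l • x) := by
  have hcomp : HasFDerivAt (fun y => u (l • y)) ((fderiv ℝ u (l • x)).comp (l • .id ℝ E)) x :=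
    (hu _).hasFDerivAt.comp x ((hasFDerivAt_id x).const_smul l)
  refine (hcomp.const_smul t).fderiv.trans ?_
  ext y
  simp [mul_smul, smul_comm t l]

variable [MeasurableSpace E] [BorelSpace E] [FiniteDimensional ℝ E] {μ : Measure E}
  [μ.IsAddHaarMeasure]

theorem MeasureTheory.MemLp.dilate {u : E → F} {p : ENNReal} (hu : MemLp u p μ) (t : ℝ)
    {l : ℝ} (hl : l ≠ 0) : MemLp (dilate t l u) p μ :=
  (hu.comp_smul hl).const_smul t

theorem memLp_fderiv_dilate {u : E → F} (hu : Differentiable ℝ u) {p : ENNReal}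
    (hdu : MemLp (fderiv ℝ u) p μ) (t : ℝ) {l : ℝ} (hl : l ≠ 0) :
    MemLp (fderiv ℝ (dilate t l u)) p μ := by
  rw [funext (fderiv_dilate hu t l)]
  exact hdu.dilate (t * l) hl

theorem integral_norm_dilate_pow (t : ℝ) {l : ℝ} (hl : 0 < l) (u : E → F) (p : ℕ) :
    ∫ x, ‖dilate t l u x‖ ^ p ∂μ = |t| ^ p / l ^ finrank ℝ E * ∫ x, ‖u x‖ ^ p ∂μ := by
  simp_rw [norm_dilate, mul_pow]
  rw [integral_const_mul,
    Measure.integral_comp_smul_of_nonneg μ (fun x => ‖u x‖ ^ p) l (hR := hl.le), smul_eq_mul]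
  ring

theorem integral_norm_fderiv_dilate_sq {u : E → F} (hu : Differentiable ℝ u) (t : ℝ) {l : ℝ}
    (hl : 0 < l) : ∫ x, ‖fderiv ℝ (dilate t l u) x‖ ^ 2 ∂μ
      = (t * l) ^ 2 / l ^ finrank ℝ E * ∫ x, ‖fderiv ℝ u x‖ ^ 2 ∂μ := by
  rw [funext (fderiv_dilate hu t l), ← sq_abs (t * l)]
  exact integral_norm_dilate_pow (t * l) hl (fderiv ℝ u) 2

end Dilation

theorem InH1.dilate {u : E2 → ℂ} (hu : InH1 u) (t : ℝ) {l : ℝ} (hl : l ≠ 0) :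
    InH1 (dilate t l u) :=
  ⟨(hu.1.comp (differentiable_id.const_smul l)).const_smul t, hu.2.1.dilate t hl,
    memLp_fderiv_dilate hu.1 hu.2.2 t hl⟩

def energy (b : ℝ) (u : E2 → ℂ) : ℝ :=
  (∫ x, ‖fderiv ℝ u x‖ ^ 2) + b / 2 * ∫ x, ‖u x‖ ^ 4

theorem integral_norm_sq_dilate (t : ℝ) {l : ℝ} (hl : 0 < l) (u : E2 → ℂ) :
    ∫ x, ‖dilate t l u x‖ ^ 2 = t ^ 2 / l ^ 2 * ∫ x, ‖u x‖ ^ 2 := by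
  simpa using integral_norm_dilate_pow (μ := volume) t hl u 2

theorem energy_dilate (b : ℝ) {u : E2 → ℂ} (hu : Differentiable ℝ u) (t : ℝ) {l : ℝ}
    (hl : 0 < l) : energy b (dilate t l u)
      = t ^ 2 * (∫ x, ‖fderiv ℝ u x‖ ^ 2) + b / 2 * (t ^ 4 / l ^ 2) * ∫ x, ‖u x‖ ^ 4 := by
  have hK := integral_norm_fderiv_dilate_sq (μ := volume) hu t hl
  have hP := integral_norm_dilate_pow (μ := volume) t hl u 4
  simp only [finrank_euclideanSpace_fin, (by norm_num : Even 4).pow_abs] at hK hP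
  rw [energy, hK, hP]
  field_simp

theorem IsGNOptimal.exists_energy_neg {astar b : ℝ} (hastar : IsGNOptimal astar)
    (hb : b < -astar) : ∃ u : E2 → ℂ, InH1 u ∧ (∫ x, ‖u x‖ ^ 2) = 1 ∧ energy b u < 0 := by
  have hnot : -b ∉ {a : ℝ | ∀ u : E2 → ℂ, InH1 u →
      (∫ x, ‖u x‖ ^ 2) * (∫ x, ‖fderiv ℝ u x‖ ^ 2) ≥ a / 2 * ∫ x, ‖u x‖ ^ 4} :=
    fun h => absurd (hastar.2.2 h) (by linarith)
  simp only [Set.mem_ofPred_eq, not_forall, not_le] at hnot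
  obtain ⟨u, hu, hlt⟩ := hnot
  have hmass := integral_norm_sq_dilate (√(∫ x, ‖u x‖ ^ 2))⁻¹ one_pos u
  have henergy := energy_dilate b hu.1 (√(∫ x, ‖u x‖ ^ 2))⁻¹ one_pos
  set M := ∫ x, ‖u x‖ ^ 2
  set K := ∫ x, ‖fderiv ℝ u x‖ ^ 2
  set P := ∫ x, ‖u x‖ ^ 4
  have hGN : M * K ≥ astar / 2 * P := hastar.2.1 u hu
  have hP : 0 < P := by nlinarith
  have hM : 0 < M := by
    have : 0 ≤ K := integral_nonneg fun x => by positivity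
    have : 0 ≤ M := integral_nonneg fun x => by positivity
    nlinarith [hastar.1]
  have hc2 : ((√M)⁻¹) ^ 2 = M⁻¹ := by rw [inv_pow, Real.sq_sqrt hM.le]
  have hc4 : ((√M)⁻¹) ^ 4 = (M ^ 2)⁻¹ := by
    rw [show 4 = 2 * 2 from rfl, pow_mul, hc2, inv_pow]
  refine ⟨dilate (√M)⁻¹ 1 u, hu.dilate _ one_ne_zero, ?_, ?_⟩
  · rw [hmass, hc2]
    field_simp
  · -- the normalised function has energy `(M K + b/2 P) / M²`
    rw [henergy, hc2, hc4]
    have : (M ^ 2)⁻¹ * (M * K + b / 2 * P) < 0 :=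
      mul_neg_of_pos_of_neg (by positivity) (by linarith)
    convert this using 1
    field_simp

theorem exists_energy_lt_of_energy_neg {b : ℝ} {u : E2 → ℂ} (hu : InH1 u)
    (hmass : (∫ x, ‖u x‖ ^ 2) = 1) (hneg : energy b u < 0) (C : ℝ) :
    ∃ v : E2 → ℂ, InH1 v ∧ (∫ x, ‖v x‖ ^ 2) = 1 ∧ energy b v < C := by
  have hlim : Tendsto (fun l : ℝ => l ^ 2 * energy b u) atTop atBot :=
    (tendsto_pow_atTop two_ne_zero).atTop_mul_const_of_neg hneg
  obtain ⟨l, hlC, hl⟩ :=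
    ((hlim.eventually (eventually_lt_atBot C)).and (eventually_gt_atTop 0)).exists
  refine ⟨dilate l l u, hu.dilate l hl.ne', ?_, ?_⟩
  · rw [integral_norm_sq_dilate l hl, hmass]
    field_simp
  · rw [energy_dilate b hu.1 l hl]
    refine Eq.trans_lt ?_ hlC
    unfold energy
    field_simp

/-- if `b < -a*` then `u ↦ ∫|∇u|² + (b/2)∫|u|⁴` is unbounded below
on the unit `L²`-sphere of `H¹(ℝ²)`. -/
theorem nls_unbounded_below (astar : ℝ) (hastar : IsGNOptimal astar)
    (b : ℝ) (hb : b < -astar) :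
    ∀ C : ℝ, ∃ u : E2 → ℂ, InH1 u ∧ (∫ x, ‖u x‖ ^ 2) = 1 ∧
      (∫ x, ‖fderiv ℝ u x‖ ^ 2) + b / 2 * ∫ x, ‖u x‖ ^ 4 < C := by
  obtain ⟨u, hu, hmass, hneg⟩ := hastar.exists_energy_neg hb
  exact exists_energy_lt_of_energy_neg hu hmass hneg
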